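/- For every integer n ≥ 1, consider the CAPR instance with lexicographic preferences having two applicants a₁ (of capacity n) and a₂ (of capacity 1) and courses c_1,…,c_n, each of capacity 1; the preference list of a₁ is c_1, c_2, …, c_n and the preference list of a₂ consists of the single course c_n; the prerequisites, identical for both applicants, are the strict partial order generated by c_i → c_{i+1} for 1 ≤ i ≤ n−1. Then this instance has exactly two Pareto optimal matchings, namely M₁ = {(a₁, c_j) : 1 ≤ j ≤ n} of cardinality n and M₂ = {(a₂, c_n)} of cardinality 1. In particular, the difference in cardinalities between Pareto optimal matchings of a CAPR instance can be arbitrarily large. -/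

import Mathlib

/-!
The last course `c_n` is a prerequisite of every other course, so any nonempty bundle of `a₁`
contains it; as `c_n` has a single seat and is the only course `a₂` accepts, every matching
either gives nothing to `a₂`, and is then contained in `M₁`, or is `M₂`. A matching strictly
contained in another is dominated by it, which leaves `M₁` and `M₂`. Neither can be dominated:
an applicant who is not to lose out must keep her bundle (`M₁` gives `a₁` everything, `M₂` gives
`a₂` everything she accepts), and this forces the whole matching.
-/

open Finset

def bundle {A C : Type*} [DecidableEq A] [DecidableEq C]
    (M : Finset (A × C)) (a : A) : Finset C :=
  (M.filter fun p => p.1 = a).image Prod.snd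

def slots {A C : Type*} [DecidableEq C] (M : Finset (A × C)) (c : C) : ℕ :=
  (M.filter fun p => p.2 = c).card

/-- Lexicographic comparison of bundles w.r.t. a preference list (earlier = better). -/
def lexPrefers {C : Type*} [DecidableEq C] (l : List C) (S₁ S₂ : Finset C) : Prop :=
  ∃ c ∈ S₁ \ S₂, ∀ d ∈ (S₁ \ S₂) ∪ (S₂ \ S₁), l.idxOf c ≤ l.idxOf d

def IsFeasible {A C : Type*} (pref : A → List C) (qA : A → ℕ)
    (prereq : A → C → C → Prop) (a : A) (S : Finset C) : Prop :=
  (∀ c ∈ S, c ∈ pref a) ∧ S.card ≤ qA a ∧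
    ∀ c ∈ S, ∀ c', prereq a c c' → c' ∈ S

def IsMatching {A C : Type*} [DecidableEq A] [DecidableEq C]
    (pref : A → List C) (qA : A → ℕ) (qC : C → ℕ)
    (prereq : A → C → C → Prop) (M : Finset (A × C)) : Prop :=
  (∀ a, IsFeasible pref qA prereq a (bundle M a)) ∧ ∀ c, slots M c ≤ qC c

def Dominates {A C : Type*} [DecidableEq A] [DecidableEq C]
    (pref : A → List C) (M' M : Finset (A × C)) : Prop :=
  (∃ a, lexPrefers (pref a) (bundle M' a) (bundle M a)) ∧
    ∀ a, ¬ lexPrefers (pref a) (bundle M a) (bundle M' a)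

def ParetoOptimal {A C : Type*} [DecidableEq A] [DecidableEq C]
    (pref : A → List C) (qA : A → ℕ) (qC : C → ℕ)
    (prereq : A → C → C → Prop) (M : Finset (A × C)) : Prop :=
  IsMatching pref qA qC prereq M ∧
    ∀ M', IsMatching pref qA qC prereq M' → ¬ Dominates pref M' M

section

variable {A C : Type*} [DecidableEq A] [DecidableEq C]

lemma mem_bundle {M : Finset (A × C)} {a : A} {c : C} : c ∈ bundle M a ↔ (a, c) ∈ M := by
  simp [bundle]

lemma bundle_mono {M M' : Finset (A × C)} (h : M ⊆ M') (a : A) : bundle M a ⊆ bundle M' a :=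
  fun _ hc => mem_bundle.2 (h (mem_bundle.1 hc))

lemma not_lexPrefers_of_subset (l : List C) {S T : Finset C} (h : S ⊆ T) :
    ¬ lexPrefers l S T := by
  rintro ⟨c, hc, -⟩
  simp [sdiff_eq_empty_iff_subset.2 h] at hc

lemma lexPrefers_of_ssubset (l : List C) {S T : Finset C} (h : T ⊂ S) : lexPrefers l S T := by
  obtain ⟨c, hc, hmin⟩ := (S \ T).exists_min_image l.idxOf (sdiff_nonempty.2 h.2)
  refine ⟨c, hc, fun d hd => hmin d ?_⟩
  simpa [sdiff_eq_empty_iff_subset.2 h.1] using hd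

lemma eq_of_subset_of_not_lexPrefers (l : List C) {S T : Finset C} (h : T ⊆ S)
    (hT : ¬ lexPrefers l S T) : T = S := by
  by_contra hne
  exact hT (lexPrefers_of_ssubset l (h.ssubset_of_ne hne))

lemma Dominates.ne {pref : A → List C} {M' M : Finset (A × C)} (h : Dominates pref M' M) :
    M' ≠ M := by
  rintro rfl
  obtain ⟨a, ha⟩ := h.1
  exact not_lexPrefers_of_subset _ subset_rfl ha

lemma dominates_of_ssubset (pref : A → List C) {M M' : Finset (A × C)} (h : M ⊂ M') :
    Dominates pref M' M := by
  obtain ⟨⟨a, c⟩, hc', hc⟩ := exists_of_ssubset h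
  refine ⟨⟨a, lexPrefers_of_ssubset _ ?_⟩, fun b => not_lexPrefers_of_subset _ (bundle_mono h.1 b)⟩
  exact (Finset.ssubset_iff_of_subset (bundle_mono h.1 a)).2
    ⟨c, mem_bundle.2 hc', fun hc'' => hc (mem_bundle.1 hc'')⟩

end

lemma eq_of_slots_le_one {A C : Type*} [DecidableEq C] {M : Finset (A × C)} {c : C}
    (h : slots M c ≤ 1) {a a' : A} (ha : (a, c) ∈ M) (ha' : (a', c) ∈ M) : a = a' :=
  congrArg Prod.fst (card_le_one.1 h _ (mem_filter.2 ⟨ha, rfl⟩) _ (mem_filter.2 ⟨ha', rfl⟩))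

-- Applicant `false` is `a₁`, applicant `true` is `a₂`, and course `c_i` is `i - 1 : Fin n`.
namespace ChainCAPR

variable {n : ℕ} (hn : 0 < n)

def last : Fin n := ⟨n - 1, Nat.sub_one_lt_of_lt hn⟩

def pref : Bool → List (Fin n) := fun a => if a then [last hn] else List.finRange n

def cap (n : ℕ) : Bool → ℕ := fun a => if a then 1 else n

def prereq (n : ℕ) : Bool → Fin n → Fin n → Prop := fun _ c c' => c < c'

abbrev IsChainMatching (M : Finset (Bool × Fin n)) : Prop :=
  IsMatching (pref hn) (cap n) (fun _ => 1) (prereq n) M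

def M₁ (n : ℕ) : Finset (Bool × Fin n) := univ.image fun j => (false, j)

def M₂ : Finset (Bool × Fin n) := {(true, last hn)}

lemma le_last (c : Fin n) : c ≤ last hn :=
  Fin.le_def.2 (by simp only [last]; omega)

@[simp]
lemma mem_M₁ {p : Bool × Fin n} : p ∈ M₁ n ↔ p.1 = false := by
  obtain ⟨a, c⟩ := p
  simp [M₁, eq_comm]

lemma bundle_M₁_false : bundle (M₁ n) false = univ := by
  ext c; simp [mem_bundle]

lemma bundle_M₁_true : bundle (M₁ n) true = ∅ := by
  ext c; simp [mem_bundle]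

lemma bundle_M₂_false : bundle (M₂ hn) false = ∅ := by
  ext c; simp [mem_bundle, M₂]

lemma bundle_M₂_true : bundle (M₂ hn) true = {last hn} := by
  ext c; simp [mem_bundle, M₂]

lemma isChainMatching_M₁ : IsChainMatching hn (M₁ n) := by
  refine ⟨fun a => ?_, fun c => card_le_one.2 ?_⟩
  · cases a
    · rw [bundle_M₁_false]
      exact ⟨fun c _ => by simp [pref], by simp [cap], fun _ _ _ _ => mem_univ _⟩
    · rw [bundle_M₁_true]
      exact ⟨by simp, by simp, by simp⟩
  · rintro ⟨a, c₁⟩ h₁ ⟨b, c₂⟩ h₂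
    simp only [mem_filter, mem_M₁] at h₁ h₂
    rw [h₁.1, h₁.2, h₂.1, h₂.2]

lemma isChainMatching_M₂ : IsChainMatching hn (M₂ hn) := by
  refine ⟨fun a => ?_, fun c => (card_filter_le _ _).trans (by simp [M₂])⟩
  cases a
  · rw [bundle_M₂_false]
    exact ⟨by simp, by simp, by simp⟩
  · rw [bundle_M₂_true]
    refine ⟨fun c hc => by simp_all [pref], by simp [cap], ?_⟩
    rintro c hc c' hc'
    rw [mem_singleton.1 hc] at hc'
    exact absurd (le_last hn c') (not_le.2 hc')

variable {hn}

lemma bundle_true_subset {M : Finset (Bool × Fin n)} (hM : IsChainMatching hn M) :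
    bundle M true ⊆ {last hn} := fun c hc => by
  simpa [pref] using (hM.1 true).1 c hc

lemma last_mem_bundle_false {M : Finset (Bool × Fin n)} (hM : IsChainMatching hn M) {c : Fin n}
    (hc : c ∈ bundle M false) : last hn ∈ bundle M false := by
  rcases (le_last hn c).eq_or_lt with rfl | hlt
  · exact hc
  · exact (hM.1 false).2.2 c hc _ hlt

lemma subset_M₁_or_eq_M₂ {M : Finset (Bool × Fin n)} (hM : IsChainMatching hn M) :
    M ⊆ M₁ n ∨ M = M₂ hn := by
  by_cases hlast : (true, last hn) ∈ M
  · right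
    ext ⟨a, c⟩
    cases a
    · refine iff_of_false (fun hc => ?_) (by simp [M₂])
      have := last_mem_bundle_false hM (mem_bundle.2 hc)
      exact Bool.false_ne_true (eq_of_slots_le_one (hM.2 _) (mem_bundle.1 this) hlast)
    · refine ⟨fun hc => ?_, fun hc => ?_⟩
      · simpa [M₂] using bundle_true_subset hM (mem_bundle.2 hc)
      · obtain rfl : c = last hn := by simpa [M₂] using hc
        exact hlast
  · left
    rintro ⟨a, c⟩ hc
    cases a
    · simp
    · have := bundle_true_subset hM (mem_bundle.2 hc)
      exact absurd (mem_singleton.1 this ▸ hc) hlast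

lemma eq_of_paretoOptimal {M : Finset (Bool × Fin n)}
    (hM : ParetoOptimal (pref hn) (cap n) (fun _ => 1) (prereq n) M) :
    M = M₁ n ∨ M = M₂ hn := by
  refine (subset_M₁_or_eq_M₂ hM.1).imp (fun hsub => ?_) id
  by_contra hne
  exact hM.2 _ (isChainMatching_M₁ hn) (dominates_of_ssubset _ (hsub.ssubset_of_ne hne))

variable (hn)

lemma paretoOptimal_M₁ : ParetoOptimal (pref hn) (cap n) (fun _ => 1) (prereq n) (M₁ n) := by
  refine ⟨isChainMatching_M₁ hn, fun M hM hdom => ?_⟩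
  have hfalse : bundle M false = univ := by
    have := hdom.2 false
    rw [bundle_M₁_false] at this
    exact eq_of_subset_of_not_lexPrefers _ (subset_univ _) this
  rcases subset_M₁_or_eq_M₂ hM with hsub | rfl
  · refine hdom.ne (hsub.antisymm fun ⟨a, c⟩ hc => ?_)
    obtain rfl : a = false := mem_M₁.1 hc
    rw [← mem_bundle, hfalse]
    exact mem_univ c
  · rw [bundle_M₂_false] at hfalse
    exact notMem_empty (last hn) (hfalse ▸ mem_univ _)

lemma paretoOptimal_M₂ : ParetoOptimal (pref hn) (cap n) (fun _ => 1) (prereq n) (M₂ hn) := by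
  refine ⟨isChainMatching_M₂ hn, fun M hM hdom => ?_⟩
  rcases subset_M₁_or_eq_M₂ hM with hsub | rfl
  · have hempty : bundle M true = ∅ :=
      subset_empty.1 (bundle_M₁_true (n := n) ▸ bundle_mono hsub true)
    apply hdom.2 true
    rw [hempty, bundle_M₂_true]
    exact lexPrefers_of_ssubset _ (empty_ssubset.2 (singleton_nonempty _))
  · exact hdom.ne rfl

end ChainCAPR

open ChainCAPR

/-- the CAPR instance with applicants `a₁ = false` (capacity `n`) and
`a₂ = true` (capacity 1) and courses `c_1, …, c_n` (capacity 1 each), where `a₁`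
ranks all courses in increasing indicial order, `a₂'s` list is the single course
`c_n`, and the prerequisites (identical for both applicants) form the strict
partial order generated by `c_i → c_{i+1}`, i.e. `c_i → c_j` iff `i < j`.  Its
Pareto optimal matchings are exactly `M₁` (assigning all `n` courses to `a₁`) and
`M₂` (assigning the single course `c_n` to `a₂`), which are distinct and have
cardinalities `n` and `1` respectively. -/
theorem capr_two_poms_arbitrary_gap {n : ℕ} (hn : 0 < n) :
    (∀ M : Finset (Bool × Fin n),
        ParetoOptimal
          (fun a : Bool =>
            if a then [(⟨n - 1, by omega⟩ : Fin n)] else List.finRange n)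
          (fun a : Bool => if a then 1 else n) (fun _ => 1)
          (fun _ (c c' : Fin n) => c < c') M ↔
        (M = Finset.univ.image (fun j : Fin n => (false, j)) ∨
          M = {(true, (⟨n - 1, by omega⟩ : Fin n))})) ∧
    (Finset.univ.image (fun j : Fin n => (false, j)) ≠
      ({(true, (⟨n - 1, by omega⟩ : Fin n))} : Finset (Bool × Fin n))) ∧
    (Finset.univ.image (fun j : Fin n => (false, j)) : Finset (Bool × Fin n)).card
      = n ∧
    ({(true, (⟨n - 1, by omega⟩ : Fin n))} : Finset (Bool × Fin n)).card = 1 := by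
  refine ⟨fun M => ⟨eq_of_paretoOptimal (hn := hn), ?_⟩, ?_, ?_, card_singleton _⟩
  · rintro (rfl | rfl)
    · exact paretoOptimal_M₁ hn
    · exact paretoOptimal_M₂ hn
  · intro h
    simpa using congrArg ((false, last hn) ∈ ·) h
  · rw [card_image_of_injective _ fun _ _ h => (Prod.ext_iff.1 h).2, card_univ, Fintype.card_fin]
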